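/- Let k be a field and M an m×n matrix of indeterminates over k with m ≥ n ≥ r ≥ 1. In the polynomial ring k[M], for any ℓ ≥ 1 and after the substitution x_{ij} = y_{11}·y_{ij} for (i,j) ≠ (1,1) and x_{11} = y_{11}, the ideal of ℓ×ℓ minors satisfies I_ℓ(M) = y_{11}^ℓ · I_{ℓ-1}(M₁'), where M₁' is the (m-1)×(n-1) matrix with entries f_{ij} = y_{ij} - y_{i1}y_{1j} for 2 ≤ i ≤ m, 2 ≤ j ≤ n. -/

import Mathlib

/-!
On the chart, the matrix of the statement is `y₀₀ • N`, where `N` has `1` in the corner and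
`y_{ij}` elsewhere, so its `(ℓ+1)`-minors are `y₀₀^{ℓ+1}` times those of `N`. Pivoting on a unit
corner entry does not change determinantal ideals: `I_{ℓ+1}(N) = I_ℓ(N')` for the Schur complement
`N'` of the corner, and `N'` is exactly `M₁'`. One inclusion holds because bordering an `ℓ`-minor
of `N'` by row and column `0` gives an `(ℓ+1)`-minor of `N` with the same determinant; for the
other, a minor of `N` is itself the Schur complement of a bordered matrix whose interior is a
submatrix of `S = N - N_{•0} N_{0•}`, and expanding along the border twice leaves `ℓ`-minors of
`S`, which vanish or are minors of `N'`.
-/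

open MvPolynomial

/-- The ideal of `s × s` minors of a matrix `A`. -/
def minorsIdeal {R : Type*} [CommRing R] {a b : ℕ} (s : ℕ)
    (A : Matrix (Fin a) (Fin b) R) : Ideal R :=
  Ideal.span {d | ∃ (f : Fin s → Fin a) (g : Fin s → Fin b),
    Function.Injective f ∧ Function.Injective g ∧ d = (A.submatrix f g).det}

namespace Matrix

variable {R : Type*} [CommRing R]

/-- For `P 0 0 = 1` this is the Schur complement of the corner entry; for the matrix `N` of the
chart `U₁₁` it is the paper's `M₁'`. -/
def cornerSchur {a b : ℕ} (P : Matrix (Fin (a + 1)) (Fin (b + 1)) R) : Matrix (Fin a) (Fin b) R :=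
  of fun i j => P i.succ j.succ - P i.succ 0 * P 0 j.succ

theorem det_eq_det_cornerSchur {s : ℕ} (P : Matrix (Fin (s + 1)) (Fin (s + 1)) R)
    (h : P 0 0 = 1) : P.det = P.cornerSchur.det := by
  let e : Fin (s + 1) ≃ Fin s ⊕ Unit := (finSuccEquiv s).trans (Equiv.optionEquivSumPUnit _)
  have hblocks : reindex e e P = fromBlocks (P.submatrix Fin.succ Fin.succ)
      (of fun i _ => P i.succ 0) (of fun _ j => P 0 j.succ) 1 := by
    ext (i | i) (j | j) <;> simp [e, h]
  rw [← det_reindex_self e, hblocks, det_fromBlocks_one₂₂]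
  congr 1
  ext i j
  simp [mul_apply, cornerSchur]

end Matrix

open Matrix

section minorsIdeal

variable {R : Type*} [CommRing R] {a b s : ℕ}

theorem det_submatrix_mem_minorsIdeal (A : Matrix (Fin a) (Fin b) R) {f : Fin s → Fin a}
    {g : Fin s → Fin b} (hf : f.Injective) (hg : g.Injective) :
    (A.submatrix f g).det ∈ minorsIdeal s A :=
  Ideal.subset_span ⟨f, g, hf, hg, rfl⟩

theorem det_mem_minorsIdeal (D : Matrix (Fin (s + 1)) (Fin (s + 1)) R) :
    D.det ∈ minorsIdeal s D := by
  rw [det_succ_row_zero]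
  exact Ideal.sum_mem _ fun j _ => Ideal.mul_mem_left _ _ <|
    det_submatrix_mem_minorsIdeal D (Fin.succ_injective _) Fin.succAbove_right_injective

theorem det_mem_minorsIdeal_submatrix_succ (P : Matrix (Fin (s + 2)) (Fin (s + 2)) R) :
    P.det ∈ minorsIdeal s (P.submatrix Fin.succ Fin.succ) := by
  rw [det_succ_row_zero, Fin.sum_univ_succ]
  refine add_mem (Ideal.mul_mem_left _ _ (det_mem_minorsIdeal _)) <|
    Ideal.sum_mem _ fun j _ => Ideal.mul_mem_left _ _ ?_
  rw [det_succ_column_zero]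
  refine Ideal.sum_mem _ fun i _ => Ideal.mul_mem_left _ _ ?_
  have hcofactor : ((P.submatrix Fin.succ j.succ.succAbove).submatrix i.succAbove Fin.succ) =
      (P.submatrix Fin.succ Fin.succ).submatrix i.succAbove j.succAbove := by
    ext
    simp [Fin.succ_succAbove_succ]
  rw [hcofactor]
  exact det_submatrix_mem_minorsIdeal _ Fin.succAbove_right_injective
    Fin.succAbove_right_injective

theorem minorsIdeal_submatrix_le (A : Matrix (Fin a) (Fin b) R) {c d : ℕ} {p : Fin c → Fin a}
    {q : Fin d → Fin b} (hp : p.Injective) (hq : q.Injective) :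
    minorsIdeal s (A.submatrix p q) ≤ minorsIdeal s A := by
  refine Ideal.span_le.mpr ?_
  rintro _ ⟨f, g, hf, hg, rfl⟩
  exact det_submatrix_mem_minorsIdeal A (hp.comp hf) (hq.comp hg)

theorem minorsIdeal_le_minorsIdeal_submatrix_succ (A : Matrix (Fin (a + 1)) (Fin (b + 1)) R)
    (hrow : ∀ j, A 0 j = 0) (hcol : ∀ i, A i 0 = 0) :
    minorsIdeal s A ≤ minorsIdeal s (A.submatrix Fin.succ Fin.succ) := by
  refine Ideal.span_le.mpr ?_
  rintro _ ⟨f, g, hf, hg, rfl⟩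
  by_cases hf0 : ∃ i, f i = 0
  · obtain ⟨i, hi⟩ := hf0
    rw [det_eq_zero_of_row_eq_zero i fun j => by simp [hi, hrow]]
    exact zero_mem _
  by_cases hg0 : ∃ j, g j = 0
  · obtain ⟨j, hj⟩ := hg0
    rw [det_eq_zero_of_column_eq_zero j fun i => by simp [hj, hcol]]
    exact zero_mem _
  push Not at hf0 hg0
  have hpred : A.submatrix f g = (A.submatrix Fin.succ Fin.succ).submatrix
      (fun i => (f i).pred (hf0 i)) (fun j => (g j).pred (hg0 j)) := by
    ext
    simp
  rw [hpred]
  exact det_submatrix_mem_minorsIdeal _ (fun i i' h => hf (Fin.pred_inj.mp h))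
    (fun j j' h => hg (Fin.pred_inj.mp h))

theorem minorsIdeal_smul (c : R) (A : Matrix (Fin a) (Fin b) R) :
    minorsIdeal s (c • A) = Ideal.span {c ^ s} * minorsIdeal s A := by
  have hdet (f : Fin s → Fin a) (g : Fin s → Fin b) :
      ((c • A).submatrix f g).det = c ^ s * (A.submatrix f g).det := by
    have := det_smul (A.submatrix f g) c
    rwa [Fintype.card_fin] at this
  rw [minorsIdeal, minorsIdeal, Ideal.span_mul_span', Set.singleton_mul]
  congr 1
  ext d
  constructor
  · rintro ⟨f, g, hf, hg, rfl⟩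
    exact ⟨_, ⟨f, g, hf, hg, rfl⟩, (hdet f g).symm⟩
  · rintro ⟨_, ⟨f, g, hf, hg, rfl⟩, rfl⟩
    exact ⟨f, g, hf, hg, (hdet f g).symm⟩

theorem minorsIdeal_succ_le_minorsIdeal_cornerSchur (N : Matrix (Fin (a + 1)) (Fin (b + 1)) R)
    (h : N 0 0 = 1) : minorsIdeal (s + 1) N ≤ minorsIdeal s N.cornerSchur := by
  refine Ideal.span_le.mpr ?_
  rintro _ ⟨f, g, hf, hg, rfl⟩
  let S : Matrix (Fin (a + 1)) (Fin (b + 1)) R := of fun i j => N i j - N i 0 * N 0 j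
  -- `P` borders `S_{fg}` so that its corner Schur complement is `S_{fg} + N_{f0} N_{0g} = N_{fg}`.
  let P : Matrix (Fin (s + 2)) (Fin (s + 2)) R :=
    of (vecCons (vecCons 1 fun j => -N 0 (g j)) fun i => vecCons (N (f i) 0) (S (f i) ∘ g))
  have hP : (N.submatrix f g).det = P.det := by
    rw [det_eq_det_cornerSchur P (by simp [P])]
    congr 1
    ext i j
    simp [P, S, cornerSchur]
  have hS : S.submatrix Fin.succ Fin.succ = N.cornerSchur := by
    ext i j
    simp [S, cornerSchur]
  have hle : minorsIdeal s (S.submatrix f g) ≤ minorsIdeal s N.cornerSchur :=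
    (minorsIdeal_submatrix_le S hf hg).trans <|
      hS ▸ minorsIdeal_le_minorsIdeal_submatrix_succ S (by simp [S, h]) (by simp [S, h])
  rw [SetLike.mem_coe, hP]
  exact hle (det_mem_minorsIdeal_submatrix_succ P)

theorem minorsIdeal_cornerSchur_le_minorsIdeal_succ (N : Matrix (Fin (a + 1)) (Fin (b + 1)) R)
    (h : N 0 0 = 1) : minorsIdeal s N.cornerSchur ≤ minorsIdeal (s + 1) N := by
  refine Ideal.span_le.mpr ?_
  rintro _ ⟨p, q, hp, hq, rfl⟩
  have hcons {c : ℕ} {r : Fin s → Fin c} (hr : r.Injective) :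
      (Fin.cons 0 (Fin.succ ∘ r) : Fin (s + 1) → Fin (c + 1)).Injective :=
    Fin.cons_injective_iff.mpr
      ⟨fun ⟨i, hi⟩ => Fin.succ_ne_zero _ hi, (Fin.succ_injective _).comp hr⟩
  have hminor : (N.cornerSchur.submatrix p q).det =
      (N.submatrix (Fin.cons 0 (Fin.succ ∘ p)) (Fin.cons 0 (Fin.succ ∘ q))).det := by
    rw [det_eq_det_cornerSchur _ (by simpa using h)]
    rfl
  rw [SetLike.mem_coe, hminor]
  exact det_submatrix_mem_minorsIdeal N (hcons hp) (hcons hq)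

theorem minorsIdeal_succ_eq_minorsIdeal_cornerSchur (N : Matrix (Fin (a + 1)) (Fin (b + 1)) R)
    (h : N 0 0 = 1) : minorsIdeal (s + 1) N = minorsIdeal s N.cornerSchur :=
  le_antisymm (minorsIdeal_succ_le_minorsIdeal_cornerSchur N h)
    (minorsIdeal_cornerSchur_le_minorsIdeal_succ N h)

end minorsIdeal

theorem stmt_12_general (k : Type*) [Field k] (m n ℓ : ℕ) :
    minorsIdeal (ℓ + 1)
        (fun (i : Fin (m + 1)) (j : Fin (n + 1)) =>
          if i = 0 ∧ j = 0 then (X (0, 0) : MvPolynomial (Fin (m + 1) × Fin (n + 1)) k)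
          else X (0, 0) * X (i, j)) =
      Ideal.span {(X (0, 0) : MvPolynomial (Fin (m + 1) × Fin (n + 1)) k) ^ (ℓ + 1)} *
        minorsIdeal ℓ
          (fun (i : Fin m) (j : Fin n) =>
            (X (i.succ, j.succ) : MvPolynomial (Fin (m + 1) × Fin (n + 1)) k) -
              X (i.succ, 0) * X (0, j.succ)) := by
  let N : Matrix (Fin (m + 1)) (Fin (n + 1)) (MvPolynomial (Fin (m + 1) × Fin (n + 1)) k) :=
    of fun i j => if i = 0 ∧ j = 0 then 1 else X (i, j)
  have hfactor : (fun (i : Fin (m + 1)) (j : Fin (n + 1)) =>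
      if i = 0 ∧ j = 0 then (X (0, 0) : MvPolynomial (Fin (m + 1) × Fin (n + 1)) k)
      else X (0, 0) * X (i, j)) =
      (X (0, 0) : MvPolynomial (Fin (m + 1) × Fin (n + 1)) k) • N := by
    funext i j
    by_cases h : i = 0 ∧ j = 0 <;> simp [N, h]
  have hschur : N.cornerSchur = fun (i : Fin m) (j : Fin n) =>
      (X (i.succ, j.succ) : MvPolynomial (Fin (m + 1) × Fin (n + 1)) k) -
        X (i.succ, 0) * X (0, j.succ) := by
    funext i j
    simp [N, cornerSchur]
  rw [hfactor, minorsIdeal_smul, minorsIdeal_succ_eq_minorsIdeal_cornerSchur N (by simp [N]),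
    hschur]

/-- On the chart `U₁₁` of the blow-up, after substituting `x_{00} = y_{00}` and
`x_{ij} = y_{00} y_{ij}` for `(i,j) ≠ (0,0)`, the ideal of `(ℓ+1) × (ℓ+1)` minors
of the `(m+1) × (n+1)` matrix of indeterminates satisfies
`I_{ℓ+1}(M) = y_{00}^{ℓ+1} · I_ℓ(M₁')`, where `M₁'` is the `m × n` matrix with
entries `f_{ij} = y_{ij} - y_{i0} y_{0j}`. -/
theorem stmt_12 (k : Type*) [Field k] (m n ℓ : ℕ) (hnm : n ≤ m) :
    minorsIdeal (ℓ + 1)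
        (fun (i : Fin (m + 1)) (j : Fin (n + 1)) =>
          if i = 0 ∧ j = 0 then (X (0, 0) : MvPolynomial (Fin (m + 1) × Fin (n + 1)) k)
          else X (0, 0) * X (i, j)) =
      Ideal.span {(X (0, 0) : MvPolynomial (Fin (m + 1) × Fin (n + 1)) k) ^ (ℓ + 1)} *
        minorsIdeal ℓ
          (fun (i : Fin m) (j : Fin n) =>
            (X (i.succ, j.succ) : MvPolynomial (Fin (m + 1) × Fin (n + 1)) k) -
              X (i.succ, 0) * X (0, j.succ)) :=
  stmt_12_general k m n ℓ
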